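/- arXiv:2510.25043 — 2 statements merged into one kernel-verified Lean document; each statement's English description precedes it below -/
import Mathlib

section
/- Let G = (V, E) be a connected hedgegraph with hedgegraph polymatroid f. Then the partition connectivity of G equals the floor of the unit-weight strength of f: PC_G = ⌊ min over A ⊆ E of |E \ A| / (f(E) − f(A)) ⌋ (with convention 0/0 = +∞). -/
/-! For connected `G` and `c(A) = #Comps(V, A)` we have `f(E) - f(A) = c(A) - 1`, so the floor of
the strength is the minimum of `⌊|E \ A| / (c(A) - 1)⌋` over `A` with `c(A) ≥ 2` (the floor of a
minimum over a finite set is the minimum of the floors). The two minimizations dominate each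
other: the components of `(V, A)` form a partition with `c(A)` parts crossed only by hedges
outside `A`, and a partition `P` is refined by the components of `(V, E \ δ(P))`, so
`c(E \ δ(P)) ≥ |P|`. -/

open Finset

attribute [local instance] Classical.propDecidable

noncomputable section

variable {V E : Type*}

/-- The simple graph on `V` induced by the hyperedges of the hedges in `A`. -/
def hgGraph (hedge : E → Finset (Finset V)) (A : Finset E) : SimpleGraph V where
  Adj u v := u ≠ v ∧ ∃ e ∈ A, ∃ h ∈ hedge e, u ∈ h ∧ v ∈ h
  symm := by
    constructor
    rintro u v ⟨hne, e, he, h, hh, hu, hv⟩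
    exact ⟨hne.symm, e, he, h, hh, hv, hu⟩
  loopless := by constructor; rintro u ⟨hne, -⟩; exact hne rfl

/-- Number of connected components of the sub-hedgegraph `(V, A)`. -/
def comps (hedge : E → Finset (Finset V)) (A : Finset E) : ℕ :=
  Nat.card (hgGraph hedge A).ConnectedComponent

/-- The hedgegraph polymatroid `f(A) = |V| - #Comps(V,A)`. -/
def fH [Fintype V] (hedge : E → Finset (Finset V)) (A : Finset E) : ℕ :=
  Fintype.card V - comps hedge A

/-- Hedges of `F` crossing the partition `P`: those containing a hyperedge intersecting
at least two parts. -/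
def hedgeCut [Fintype V] [DecidableEq V] (hedge : E → Finset (Finset V)) (F : Finset E)
    (P : Finpartition (univ : Finset V)) : Finset E :=
  F.filter fun e => ∃ h ∈ hedge e, ∃ p ∈ P.parts, ∃ q ∈ P.parts,
    p ≠ q ∧ (h ∩ p).Nonempty ∧ (h ∩ q).Nonempty

/-- Partition connectivity: `min_P ⌊|δ(P)|/(|P|-1)⌋` over partitions with at least two
parts (natural number division is floored). -/
def pc [Fintype V] [DecidableEq V] [Fintype E] (hedge : E → Finset (Finset V)) : ℕ :=
  sInf {k | ∃ P : Finpartition (univ : Finset V), 2 ≤ P.parts.card ∧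
    k = (hedgeCut hedge univ P).card / (P.parts.card - 1)}

namespace Finpartition

variable {α : Type*} [Fintype α] [DecidableEq α]

theorem card_parts_ofSetoid (s : Setoid α) [DecidableRel s.r] :
    #(ofSetoid s).parts = Nat.card (Quotient s) := by
  let cls : Quotient s → Finset α := Quotient.lift (fun a ↦ ({b | s a b} : Finset α))
    fun a b hab ↦ by ext c; simpa using ⟨s.trans (s.symm hab), s.trans hab⟩
  have hcls : cls.Injective := Quotient.ind₂ fun a b h ↦ Quotient.sound <| by
    have hb : b ∈ cls ⟦b⟧ := by simp [cls]
    rw [← h] at hb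
    simpa [cls] using hb
  change #(univ.image (cls ∘ Quotient.mk s)) = _
  rw [← image_image, image_univ_of_surjective Quotient.mk_surjective,
    card_image_of_injective _ hcls, card_univ, Nat.card_eq_fintype_card]

end Finpartition

theorem Nat.floor_csInf_of_finite {S : Set ℝ} (hS : S.Finite) :
    ⌊sInf S⌋₊ = sInf (Nat.floor '' S) := by
  rcases S.eq_empty_or_nonempty with rfl | hne
  · simp -- `sInf ∅ = 0` in both `ℝ` and `ℕ`
  refine le_antisymm (le_csInf (hne.image _) ?_) (Nat.sInf_le ⟨_, hne.csInf_mem hS, rfl⟩)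
  rintro _ ⟨x, hx, rfl⟩
  exact Nat.floor_mono (csInf_le hS.bddBelow hx)

theorem Nat.floor_sInf_setOf_exists {ι : Type*} [Finite ι] (p : ι → Prop) (f : ι → ℝ) :
    ⌊sInf {x | ∃ i, p i ∧ x = f i}⌋₊ = sInf {k | ∃ i, p i ∧ k = ⌊f i⌋₊} := by
  have hS : {x | ∃ i, p i ∧ x = f i}.Finite :=
    (Set.finite_range f).subset fun _ ⟨i, _, hx⟩ ↦ ⟨i, hx.symm⟩
  rw [Nat.floor_csInf_of_finite hS]
  congr 1
  ext k
  constructor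
  · rintro ⟨_, ⟨i, hi, rfl⟩, rfl⟩
    exact ⟨i, hi, rfl⟩
  · rintro ⟨i, hi, rfl⟩
    exact ⟨_, ⟨i, hi, rfl⟩, rfl⟩

section Hedgegraph

variable (hedge : E → Finset (Finset V))

lemma reachable_of_mem_hedge {A : Finset E} {e : E} (he : e ∈ A) {h : Finset V}
    (hh : h ∈ hedge e) {u w : V} (hu : u ∈ h) (hw : w ∈ h) :
    (hgGraph hedge A).Reachable u w := by
  rcases eq_or_ne u w with rfl | huw
  · rfl
  · exact SimpleGraph.Adj.reachable ⟨huw, e, he, h, hh, hu, hw⟩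

variable [Fintype V]

lemma comps_le_card (A : Finset E) : comps hedge A ≤ Fintype.card V := by
  rw [comps, ← Nat.card_eq_fintype_card]
  exact Nat.card_le_card_of_surjective _ Quot.mk_surjective

lemma cast_fH (A : Finset E) : (fH hedge A : ℝ) = Fintype.card V - comps hedge A := by
  rw [fH, Nat.cast_sub (comps_le_card hedge A)]

lemma fH_lt_fH_iff {A B : Finset E} :
    fH hedge A < fH hedge B ↔ comps hedge B < comps hedge A := by
  have := comps_le_card hedge A
  have := comps_le_card hedge B
  rw [fH, fH]
  omega

lemma floor_div_fH_sub_fH {A B : Finset E} (n : ℕ) (h : comps hedge B ≤ comps hedge A) :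
    ⌊(n : ℝ) / ((fH hedge B : ℝ) - fH hedge A)⌋₊ = n / (comps hedge A - comps hedge B) := by
  have hsub : (fH hedge B : ℝ) - fH hedge A = ((comps hedge A - comps hedge B : ℕ) : ℝ) := by
    rw [cast_fH, cast_fH, Nat.cast_sub h]
    ring
  rw [hsub, Nat.floor_div_natCast, Nat.floor_natCast]

variable [DecidableEq V]

lemma mem_hedgeCut_iff {F : Finset E} {P : Finpartition (univ : Finset V)} {e : E} :
    e ∈ hedgeCut hedge F P ↔ e ∈ F ∧ ∃ h ∈ hedge e, ∃ u ∈ h, ∃ w ∈ h, P.part u ≠ P.part w := by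
  simp only [hedgeCut, mem_filter]
  refine and_congr_right fun _ ↦ exists_congr fun h ↦ and_congr_right fun _ ↦ ⟨?_, ?_⟩
  · rintro ⟨p, hp, q, hq, hpq, ⟨u, hu⟩, ⟨w, hw⟩⟩
    rw [mem_inter] at hu hw
    exact ⟨u, hu.1, w, hw.1, by rwa [P.part_eq_of_mem hp hu.2, P.part_eq_of_mem hq hw.2]⟩
  · rintro ⟨u, hu, w, hw, huw⟩
    exact ⟨P.part u, P.part_mem.2 (mem_univ u), P.part w, P.part_mem.2 (mem_univ w), huw,
      ⟨u, mem_inter.2 ⟨hu, P.mem_part (mem_univ u)⟩⟩,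
      ⟨w, mem_inter.2 ⟨hw, P.mem_part (mem_univ w)⟩⟩⟩

def compPartition (A : Finset E) : Finpartition (univ : Finset V) :=
  Finpartition.ofSetoid (hgGraph hedge A).reachableSetoid

lemma card_compPartition (A : Finset E) : #(compPartition hedge A).parts = comps hedge A :=
  Finpartition.card_parts_ofSetoid _

lemma part_compPartition_eq_iff {A : Finset E} {u w : V} :
    (compPartition hedge A).part u = (compPartition hedge A).part w ↔
      (hgGraph hedge A).Reachable u w := by
  rw [eq_comm, ← Finpartition.mem_part_iff_part_eq_part _ (mem_univ w) (mem_univ u)]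
  exact Finpartition.mem_part_ofSetoid_iff_rel

variable [Fintype E] [DecidableEq E]

lemma hedgeCut_compPartition_subset (A : Finset E) :
    hedgeCut hedge univ (compPartition hedge A) ⊆ univ \ A := by
  intro e he
  obtain ⟨-, h, hh, u, hu, w, hw, huw⟩ := (mem_hedgeCut_iff hedge).1 he
  refine mem_sdiff.2 ⟨mem_univ e, fun heA ↦ huw ?_⟩
  exact (part_compPartition_eq_iff hedge).2 (reachable_of_mem_hedge hedge heA hh hu hw)

lemma part_eq_part_of_reachable {P : Finpartition (univ : Finset V)} {u w : V}
    (huw : (hgGraph hedge (univ \ hedgeCut hedge univ P)).Reachable u w) :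
    P.part u = P.part w := by
  have hadj : ∀ a b, (hgGraph hedge (univ \ hedgeCut hedge univ P)).Adj a b →
      P.part a = P.part b := by
    rintro a b ⟨-, e, he, h, hh, ha, hb⟩
    by_contra hab
    exact (mem_sdiff.1 he).2 ((mem_hedgeCut_iff hedge).2 ⟨mem_univ e, h, hh, a, ha, b, hb, hab⟩)
  rw [SimpleGraph.reachable_iff_reflTransGen] at huw
  rw [← Relation.reflTransGen_eq_self (r := Eq)]
  exact huw.lift _ hadj

lemma compPartition_le (P : Finpartition (univ : Finset V)) :
    compPartition hedge (univ \ hedgeCut hedge univ P) ≤ P := by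
  intro b hb
  obtain ⟨a, ha⟩ := Finpartition.nonempty_of_mem_parts _ hb
  refine ⟨P.part a, P.part_mem.2 (mem_univ a), fun w hw ↦ ?_⟩
  rw [← Finpartition.part_eq_of_mem _ hb ha, compPartition,
    Finpartition.mem_part_ofSetoid_iff_rel] at hw
  rw [part_eq_part_of_reachable hedge hw]
  exact P.mem_part (mem_univ w)

end Hedgegraph

/-- For a connected hedgegraph, partition connectivity equals the floor
of the unit-weight strength of the hedgegraph polymatroid. -/
theorem partition_connectivity_eq_floor_strength [Fintype V] [DecidableEq V]
    [Fintype E] [DecidableEq E] (hedge : E → Finset (Finset V))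
    (hconn : comps hedge (univ : Finset E) = 1) :
    pc hedge = Nat.floor (sInf {x : ℝ | ∃ A : Finset E,
      fH hedge A < fH hedge (univ : Finset E) ∧
      x = (((univ : Finset E) \ A).card : ℝ) /
        ((fH hedge (univ : Finset E) : ℝ) - (fH hedge A : ℝ))}) := by
  rw [Nat.floor_sInf_setOf_exists, pc]
  apply csInf_eq_csInf_of_forall_exists_le
  · rintro _ ⟨P, hP, rfl⟩
    have hPA : #P.parts ≤ comps hedge (univ \ hedgeCut hedge univ P) :=
      (Finpartition.card_mono (compPartition_le hedge P)).trans_eq (card_compPartition hedge _)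
    refine ⟨_, ⟨univ \ hedgeCut hedge univ P, (fH_lt_fH_iff hedge).2 (by omega), rfl⟩, ?_⟩
    rw [floor_div_fH_sub_fH hedge _ (by omega), hconn,
      Finset.sdiff_sdiff_eq_self (subset_univ _)]
    exact Nat.div_le_div_left (by omega) (by omega)
  · rintro _ ⟨A, hA, rfl⟩
    rw [fH_lt_fH_iff, hconn] at hA
    refine ⟨_, ⟨compPartition hedge A, by rw [card_compPartition]; omega, rfl⟩, ?_⟩
    rw [floor_div_fH_sub_fH hedge _ (by omega), hconn, card_compPartition]
    exact Nat.div_le_div_right (card_le_card (hedgeCut_compPartition_subset hedge A))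

end
end

section
/- Let G = (V, E) be an n-vertex hedgegraph with connectivity λ > 0. If each hedge is independently included in a random subset A ⊆ E with probability at least 20 log n / λ, then the sub-hedgegraph (V, A) is connected with probability at least 1 − 2/n. -/
open Finset

attribute [local instance] Classical.propDecidable

noncomputable section

variable {V E : Type*}

/-- Hedges crossing the vertex set `S`. -/
def vertexCut [Fintype V] [DecidableEq V] [Fintype E]
    (hedge : E → Finset (Finset V)) (S : Finset V) : Finset E :=
  univ.filter fun e => ∃ h ∈ hedge e, (h ∩ S).Nonempty ∧ (h ∩ (univ \ S)).Nonempty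

/-- Connectivity of the hedgegraph: the minimum size of `δ(S)` over nonempty proper
vertex sets `S`. -/
def hconnectivity [Fintype V] [DecidableEq V] [Fintype E]
    (hedge : E → Finset (Finset V)) : ℕ :=
  sInf {k | ∃ S : Finset V, S.Nonempty ∧ S ≠ univ ∧ k = (vertexCut hedge S).card}

/-- The contraction of the one-hedge hedgegraph `(V,{e})` along the partition `P`: the
graph on the parts of `P`, two parts being adjacent if some hyperedge of `e` meets
both. -/
def contractGraph [Fintype V] [DecidableEq V] (hedge : E → Finset (Finset V)) (e : E)
    (P : Finpartition (univ : Finset V)) : SimpleGraph {p // p ∈ P.parts} where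
  Adj p q := p ≠ q ∧ ∃ h ∈ hedge e, (h ∩ p.1).Nonempty ∧ (h ∩ q.1).Nonempty
  symm := by constructor; rintro p q ⟨hne, h, hh, hp, hq⟩; exact ⟨hne.symm, h, hh, hq, hp⟩
  loopless := by constructor; rintro p ⟨hne, -⟩; exact hne rfl

/-- `#Comps(P(e))`: number of connected components of the contraction of `(V,{e})`
along `P`. -/
def compsContract [Fintype V] [DecidableEq V] (hedge : E → Finset (Finset V)) (e : E)
    (P : Finpartition (univ : Finset V)) : ℕ :=
  Nat.card (contractGraph hedge e P).ConnectedComponent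

/-- Weak partition connectivity. -/
def wpc [Fintype V] [DecidableEq V] [Fintype E] (hedge : E → Finset (Finset V)) : ℕ :=
  sInf {k | ∃ P : Finpartition (univ : Finset V), 2 ≤ P.parts.card ∧
    k = (∑ e : E, (P.parts.card - compsContract hedge e P)) / (P.parts.card - 1)}

/-!
Sample the hedges in `T = 3 ⌈log₂ n⌉` independent rounds of rate `r ≈ 20 log n / (λ T)`; their
union is dominated by the given sampling. In one round a component of the current
sub-hedgegraph stays unmerged only if none of the at least `λ` hedges of its cut is sampled,
which has probability `(1 - r)^λ ≤ 1/8`. A new component containing a merged old one contains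
at least two old ones, so of `c` components of which `u` stay unmerged at most `(c + u) / 2`
remain, and the expected excess `#Comps - 1` shrinks by the factor `1/2 + 1/8` per round. After
`T` rounds it is at most `(n - 1) (5/8)^T ≤ 1/n`, which bounds the probability of being
disconnected.
-/

section BernoulliExpect

variable [DecidableEq E]

/-- Expectation of `g` for the random subset of `s` containing each `e` independently with
probability `p e`. -/
def bernoulliExpect (s : Finset E) (p : E → ℝ) (g : Finset E → ℝ) : ℝ :=
  ∑ A ∈ s.powerset, (∏ e ∈ A, p e) * (∏ e ∈ s \ A, (1 - p e)) * g A

variable {s : Finset E} {p q : E → ℝ} {g h : Finset E → ℝ}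

lemma bernoulliExpect_insert {a : E} (ha : a ∉ s) (p : E → ℝ) (g : Finset E → ℝ) :
    bernoulliExpect (insert a s) p g
      = (1 - p a) * bernoulliExpect s p g
        + p a * bernoulliExpect s p (fun A => g (insert a A)) := by
  unfold bernoulliExpect
  rw [sum_powerset_insert ha, mul_sum, mul_sum]
  congr 1 <;> refine sum_congr rfl fun A hA => ?_
  · have haA : a ∉ A := fun h => ha (mem_powerset.1 hA h)
    rw [insert_sdiff_of_notMem _ haA, prod_insert fun h => ha (mem_sdiff.1 h).1]
    ring
  · have haA : a ∉ A := fun h => ha (mem_powerset.1 hA h)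
    rw [insert_sdiff_insert, sdiff_insert_of_notMem ha, prod_insert haA]
    ring

lemma bernoulliExpect_const (s : Finset E) (p : E → ℝ) (c : ℝ) :
    bernoulliExpect s p (fun _ => c) = c := by
  have htotal : ∑ A ∈ s.powerset, (∏ e ∈ A, p e) * ∏ e ∈ s \ A, (1 - p e) = 1 := by
    rw [← prod_add]
    exact prod_eq_one fun e _ => add_sub_cancel _ _
  rw [bernoulliExpect, ← sum_mul, htotal, one_mul]

lemma bernoulliExpect_const_mul (c : ℝ) :
    bernoulliExpect s p (fun A => c * g A) = c * bernoulliExpect s p g := by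
  rw [bernoulliExpect, bernoulliExpect, mul_sum]
  exact sum_congr rfl fun A _ => by ring

lemma bernoulliExpect_add :
    bernoulliExpect s p (fun A => g A + h A) = bernoulliExpect s p g + bernoulliExpect s p h := by
  rw [bernoulliExpect, bernoulliExpect, bernoulliExpect, ← sum_add_distrib]
  exact sum_congr rfl fun A _ => by ring

lemma bernoulliExpect_sum {ι : Type*} (t : Finset ι) (g : ι → Finset E → ℝ) :
    bernoulliExpect s p (fun A => ∑ i ∈ t, g i A) = ∑ i ∈ t, bernoulliExpect s p (g i) := by
  simp only [bernoulliExpect, mul_sum]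
  exact sum_comm

lemma bernoulliExpect_mono (hp : ∀ e ∈ s, p e ∈ Set.Icc 0 1) (hgh : ∀ A ⊆ s, g A ≤ h A) :
    bernoulliExpect s p g ≤ bernoulliExpect s p h := by
  refine sum_le_sum fun A hA => mul_le_mul_of_nonneg_left (hgh A (mem_powerset.1 hA)) ?_
  refine mul_nonneg (prod_nonneg fun e he => (hp e (mem_powerset.1 hA he)).1) ?_
  exact prod_nonneg fun e he => sub_nonneg.2 (hp e (mem_sdiff.1 he).1).2

lemma bernoulliExpect_mono_prob (hp : ∀ e ∈ s, p e ∈ Set.Icc 0 1)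
    (hq : ∀ e ∈ s, q e ∈ Set.Icc 0 1) (hpq : ∀ e ∈ s, p e ≤ q e) (hg : Monotone g) :
    bernoulliExpect s p g ≤ bernoulliExpect s q g := by
  induction s using Finset.induction generalizing g with
  | empty => simp [bernoulliExpect]
  | @insert a s ha ih =>
    simp only [mem_insert, forall_eq_or_imp] at hp hq hpq
    have hg' : Monotone fun A => g (insert a A) := fun A B hAB => hg (insert_subset_insert a hAB)
    have hX := ih hp.2 hq.2 hpq.2 hg
    have hY := ih hp.2 hq.2 hpq.2 hg'
    have hXY : bernoulliExpect s q g ≤ bernoulliExpect s q fun A => g (insert a A) :=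
      bernoulliExpect_mono hq.2 fun A _ => hg (subset_insert a A)
    rw [bernoulliExpect_insert ha, bernoulliExpect_insert ha]
    have h1 := mul_le_mul_of_nonneg_left hX (sub_nonneg.2 hp.1.2)
    have h2 := mul_le_mul_of_nonneg_left hY hp.1.1
    have h3 := mul_le_mul_of_nonneg_right hpq.1 (sub_nonneg.2 hXY)
    linarith

lemma bernoulliExpect_union (s : Finset E) (p q : E → ℝ) (g : Finset E → ℝ) :
    bernoulliExpect s p (fun A => bernoulliExpect s q (fun B => g (A ∪ B)))
      = bernoulliExpect s (fun e => p e + q e - p e * q e) g := by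
  induction s using Finset.induction generalizing g with
  | empty => simp [bernoulliExpect]
  | @insert a s ha ih =>
    have hinner : ∀ A : Finset E, bernoulliExpect (insert a s) q (fun B => g (A ∪ B))
        = (1 - q a) * bernoulliExpect s q (fun B => g (A ∪ B))
          + q a * bernoulliExpect s q (fun B => g (insert a (A ∪ B))) := fun A => by
      simp only [bernoulliExpect_insert ha, union_insert]
    have hinner' : ∀ A : Finset E, bernoulliExpect (insert a s) q (fun B => g (insert a A ∪ B))
        = bernoulliExpect s q (fun B => g (insert a (A ∪ B))) := fun A => by
      simp_rw [hinner, insert_union, insert_idem]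
      ring
    simp_rw [bernoulliExpect_insert ha p, hinner', hinner, bernoulliExpect_add,
      bernoulliExpect_const_mul, bernoulliExpect_insert ha _ g, ih,
      ← ih fun C => g (insert a C)]
    ring

lemma bernoulliExpect_indicator_disjoint (s : Finset E) (p : E → ℝ) (D : Finset E) :
    bernoulliExpect s p (fun A => if Disjoint A D then 1 else 0) = ∏ e ∈ s ∩ D, (1 - p e) := by
  induction s using Finset.induction with
  | empty => simp [bernoulliExpect]
  | @insert a s ha ih =>
    rw [bernoulliExpect_insert ha]
    by_cases haD : a ∈ D
    · simp only [disjoint_insert_left, haD, not_true_eq_false, false_and, if_false,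
        bernoulliExpect_const, ih, insert_inter_of_mem haD,
        prod_insert fun h => ha (mem_inter.1 h).1]
      ring
    · simp only [disjoint_insert_left, haD, not_false_eq_true, true_and, ih,
        insert_inter_of_notMem haD]
      ring

lemma bernoulliExpect_zero (s : Finset E) (g : Finset E → ℝ) :
    bernoulliExpect s (fun _ => 0) g = g ∅ := by
  induction s using Finset.induction with
  | empty => simp [bernoulliExpect]
  | insert a s ha ih => simp [bernoulliExpect_insert ha, ih]

lemma bernoulliExpect_univ_indicator [Fintype E] (P : Finset E → Prop) [DecidablePred P] :
    bernoulliExpect univ p ({A | P A}.indicator 1)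
      = ∑ A ∈ univ.filter P, (∏ e ∈ A, p e) * ∏ e ∈ Aᶜ, (1 - p e) := by
  simp [bernoulliExpect, sum_filter, compl_eq_univ_sdiff, Set.indicator_apply]

end BernoulliExpect

theorem Function.Surjective.two_mul_card_le_card_add_card_singleton_fiber {α β : Type*}
    [Fintype α] [Fintype β] [DecidableEq β] {f : α → β} (hf : f.Surjective) :
    2 * Fintype.card β ≤
      Fintype.card α + #{a | ∀ a', f a' = f a → a' = a} := by
  set S : Finset α := {a | ∀ a', f a' = f a → a' = a}
  have hfiber : ∀ b, 2 ≤ #{a | f a = b} + if b ∈ S.image f then 1 else 0 := by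
    intro b
    obtain ⟨a, rfl⟩ := hf b
    split_ifs with hb
    · exact Nat.succ_le_succ (card_pos.2 ⟨a, by simp⟩)
    · have ha : a ∉ S := fun ha => hb (mem_image_of_mem f ha)
      simp only [S, mem_filter, mem_univ, true_and, not_forall] at ha
      obtain ⟨a', ha', hne⟩ := ha
      exact one_lt_card.2 ⟨a', by simpa using ha', a, by simp, hne⟩
  calc 2 * Fintype.card β = ∑ b : β, 2 := by rw [sum_const, card_univ, smul_eq_mul, Nat.mul_comm]
    _ ≤ ∑ b : β, (#{a | f a = b} + if b ∈ S.image f then 1 else 0) := sum_le_sum fun b _ => hfiber b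
    _ = Fintype.card α + #(S.image f) := by
      rw [sum_add_distrib, ← card_eq_sum_card_fiberwise fun a _ => mem_univ (f a), sum_boole,
        filter_mem_eq_inter, univ_inter, card_univ, Nat.cast_id]
    _ ≤ Fintype.card α + #S := Nat.add_le_add_left card_image_le _

section Numerics

open Real

lemma one_sub_one_sub_pow_mem_Icc {r : ℝ} (hr : r ∈ Set.Icc 0 1) (T : ℕ) :
    1 - (1 - r) ^ T ∈ Set.Icc 0 1 :=
  ⟨sub_nonneg.2 (pow_le_one₀ (sub_nonneg.2 hr.2) (sub_le_self _ hr.1)),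
    sub_le_self _ (pow_nonneg (sub_nonneg.2 hr.2) T)⟩

lemma one_sub_pow_le_exp_neg_mul {r : ℝ} (hr : r ≤ 1) (k : ℕ) :
    (1 - r) ^ k ≤ exp (-(k * r)) :=
  calc (1 - r) ^ k ≤ exp (-r) ^ k := pow_le_pow_left₀ (sub_nonneg.2 hr) (one_sub_le_exp_neg r) k
    _ = exp (-(k * r)) := by rw [← exp_nat_mul, mul_neg]

lemma clog_two_mul_log_two_le {n : ℕ} (hn : 2 ≤ n) :
    (Nat.clog 2 n : ℝ) * log 2 ≤ 2 * log n := by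
  have hm : 1 ≤ Nat.clog 2 n := Nat.clog_pos one_lt_two hn
  have hpow : (2 : ℝ) ^ (Nat.clog 2 n - 1) < n := by
    exact_mod_cast Nat.pow_pred_clog_lt_self one_lt_two (by omega)
  have h1 : ((Nat.clog 2 n - 1 : ℕ) : ℝ) * log 2 ≤ log n := by
    rw [← log_pow]
    exact log_le_log (by positivity) hpow.le
  have h2 : log 2 ≤ log n := log_le_log (by norm_num) (by exact_mod_cast hn)
  push_cast [hm] at h1
  linarith

lemma exists_round_rate {n l : ℕ} (hn : 2 ≤ n) (hl : 0 < l) :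
    ∃ r ∈ Set.Icc (0 : ℝ) 1, 1 - (1 - r) ^ (3 * Nat.clog 2 n) ≤ min 1 (20 * log n / l) ∧
      (1 - r) ^ l ≤ 1 / 8 := by
  have hm : 1 ≤ Nat.clog 2 n := Nat.clog_pos one_lt_two hn
  rcases le_or_gt 1 (20 * log n / l) with hq | hq
  · refine ⟨1, ⟨zero_le_one, le_rfl⟩, ?_, ?_⟩
    · rw [min_eq_left hq, sub_self, zero_pow (by omega), sub_zero]
    · rw [sub_self, zero_pow hl.ne']
      norm_num
  · have hT : (1 : ℝ) ≤ 3 * Nat.clog 2 n := by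
      have : (1 : ℝ) ≤ Nat.clog 2 n := by exact_mod_cast hm
      linarith
    have hq0 : 0 ≤ 20 * log n / l := by positivity
    set r := 20 * log n / l / (3 * Nat.clog 2 n) with hr
    have hr1 : r ≤ 1 := (div_le_self hq0 hT).trans hq.le
    refine ⟨r, ⟨by positivity, hr1⟩, ?_, ?_⟩
    · have hbern := one_add_mul_le_pow (a := -r) (by linarith) (3 * Nat.clog 2 n)
      have hTr : ((3 * Nat.clog 2 n : ℕ) : ℝ) * r = 20 * log n / l := by
        rw [hr]; push_cast; field_simp
      rw [mul_neg, ← sub_eq_add_neg, ← sub_eq_add_neg, hTr] at hbern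
      rw [min_eq_right hq.le]
      linarith
    · have hlr : 3 * log 2 ≤ l * r := by
        have := clog_two_mul_log_two_le hn
        have hlog2 : 0 < log 2 := log_pos one_lt_two
        rw [hr, mul_div_assoc', mul_div_cancel₀ _ (by positivity), le_div_iff₀ (by positivity)]
        nlinarith
      have h8 : exp (-(3 * log 2)) = 1 / 8 := by
        rw [exp_neg, ← log_rpow two_pos, exp_log (by positivity)]
        norm_num
      calc (1 - r) ^ l ≤ exp (-(l * r)) := one_sub_pow_le_exp_neg_mul hr1 l
        _ ≤ exp (-(3 * log 2)) := exp_le_exp.2 (neg_le_neg hlr)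
        _ = 1 / 8 := h8

lemma sub_one_mul_pow_clog_le {n : ℕ} (hn : 1 ≤ n) {β : ℝ} (hβ0 : 0 ≤ β) (hβ : β ≤ 5 / 8) :
    ((n : ℝ) - 1) * β ^ (3 * Nat.clog 2 n) ≤ 1 / n := by
  have hn' : (1 : ℝ) ≤ n := by exact_mod_cast hn
  have hβn : β ^ (3 * Nat.clog 2 n) * (n : ℝ) ^ 2 ≤ 1 :=
    calc β ^ (3 * Nat.clog 2 n) * (n : ℝ) ^ 2
        ≤ (5 / 8) ^ (3 * Nat.clog 2 n) * ((2 : ℝ) ^ Nat.clog 2 n) ^ 2 := by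
          gcongr
          exact_mod_cast Nat.le_pow_clog one_lt_two n
      _ = (125 / 128) ^ Nat.clog 2 n := by
          rw [pow_mul, ← pow_mul (2 : ℝ), mul_comm (Nat.clog 2 n) 2, pow_mul, ← mul_pow]
          norm_num
      _ ≤ 1 := pow_le_one₀ (by norm_num) (by norm_num)
  rw [le_div_iff₀ (by positivity)]
  nlinarith [pow_nonneg hβ0 (3 * Nat.clog 2 n)]

end Numerics

section Hedgegraph

open SimpleGraph

variable (hedge : E → Finset (Finset V))

lemma hgGraph_mono : Monotone (hgGraph hedge) := by
  rintro A B hAB u v ⟨hne, e, he, h, hh, hu, hv⟩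
  exact ⟨hne, e, hAB he, h, hh, hu, hv⟩

lemma monotone_indicator_connected :
    Monotone ({A : Finset E | (hgGraph hedge A).Connected}.indicator (1 : Finset E → ℝ)) := by
  intro A B hAB
  simp only [Set.indicator_apply, Set.mem_ofPred_eq, Pi.one_apply]
  split_ifs with hA hB
  · exact le_rfl
  · exact absurd (hA.mono (hgGraph_mono hedge hAB)) hB
  all_goals norm_num

variable [Fintype V]

lemma comps_empty : comps hedge ∅ = Fintype.card V := by
  have hbot : hgGraph hedge ∅ = ⊥ := by
    ext u v
    simp [hgGraph]
  rw [comps, hbot, ← Nat.card_eq_fintype_card]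
  refine (Nat.card_eq_of_bijective (⊥ : SimpleGraph V).connectedComponentMk ⟨?_, ?_⟩).symm
  · exact fun u v huv => reachable_bot.1 (ConnectedComponent.exact huv)
  · exact fun c => c.exists_rep

lemma one_le_comps [Nonempty V] (A : Finset E) : 1 ≤ comps hedge A :=
  Nat.card_pos (α := (hgGraph hedge A).ConnectedComponent)

lemma two_le_comps_of_not_connected [Nonempty V] {A : Finset E}
    (h : ¬ (hgGraph hedge A).Connected) : 2 ≤ comps hedge A := by
  by_contra! hlt
  have : Subsingleton (hgGraph hedge A).ConnectedComponent :=
    Finite.card_le_one_iff_subsingleton.1 (Nat.le_of_lt_succ hlt)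
  exact h ⟨fun u v => ConnectedComponent.exact (Subsingleton.elim _ _)⟩

variable [DecidableEq V] [Fintype E]

lemma hconnectivity_le_card_vertexCut {S : Finset V} (hS : S.Nonempty) (hSV : S ≠ univ) :
    hconnectivity hedge ≤ #(vertexCut hedge S) :=
  Nat.sInf_le ⟨S, hS, hSV, rfl⟩

lemma two_le_card_of_hconnectivity_pos (hl : 0 < hconnectivity hedge) : 2 ≤ Fintype.card V := by
  by_contra! hV
  have : Subsingleton V := Fintype.card_le_one_iff_subsingleton.1 (Nat.le_of_lt_succ hV)
  have hcut : {k | ∃ S : Finset V, S.Nonempty ∧ S ≠ univ ∧ k = #(vertexCut hedge S)} = ∅ :=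
    Set.eq_empty_of_forall_notMem fun _ ⟨S, ⟨u, hu⟩, hSV, _⟩ =>
      hSV (eq_univ_of_forall fun v => Subsingleton.elim u v ▸ hu)
  rw [hconnectivity, hcut, Nat.sInf_empty] at hl
  exact hl.false

lemma hconnectivity_le_card_vertexCut_supp {A : Finset E} (h2 : 2 ≤ comps hedge A)
    (K : (hgGraph hedge A).ConnectedComponent) :
    hconnectivity hedge ≤ #(vertexCut hedge K.supp.toFinset) := by
  have : Nontrivial (hgGraph hedge A).ConnectedComponent :=
    Finite.one_lt_card_iff_nontrivial.1 h2
  obtain ⟨K', hK'⟩ := exists_ne K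
  obtain ⟨w, rfl⟩ := K'.exists_rep
  refine hconnectivity_le_card_vertexCut hedge (by simpa using K.nonempty_supp) fun hK => ?_
  have hw : w ∈ K.supp.toFinset := hK ▸ mem_univ w
  exact hK' ((ConnectedComponent.mem_supp_iff K w).1 (Set.mem_toFinset.1 hw))

end Hedgegraph

section Merging

open SimpleGraph

variable (hedge : E → Finset (Finset V)) [DecidableEq E]

def componentMap (A B : Finset E) :
    (hgGraph hedge A).ConnectedComponent → (hgGraph hedge (A ∪ B)).ConnectedComponent :=
  ConnectedComponent.map (Hom.ofLE (hgGraph_mono hedge subset_union_left))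

def Unmerged (A B : Finset E) (K : (hgGraph hedge A).ConnectedComponent) : Prop :=
  ∀ K', componentMap hedge A B K' = componentMap hedge A B K → K' = K

variable [Fintype V]

lemma comps_union_le (A B : Finset E) : comps hedge (A ∪ B) ≤ comps hedge A :=
  ConnectedComponent.card_le_card_of_le (hgGraph_mono hedge subset_union_left)

variable [DecidableEq V]

lemma two_mul_comps_union_le (A B : Finset E) :
    2 * comps hedge (A ∪ B) ≤ comps hedge A + #{K | Unmerged hedge A B K} := by
  rw [comps, comps, Nat.card_eq_fintype_card, Nat.card_eq_fintype_card]
  convert (ConnectedComponent.surjective_map_ofLE (hgGraph_mono hedge subset_union_left)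
    ).two_mul_card_le_card_add_card_singleton_fiber
  exact Iff.rfl

variable [Fintype E]

lemma not_unmerged_of_mem_vertexCut {A B : Finset E} {K : (hgGraph hedge A).ConnectedComponent}
    {e : E} (heB : e ∈ B) (hcut : e ∈ vertexCut hedge K.supp.toFinset) :
    ¬ Unmerged hedge A B K := by
  obtain ⟨-, h, hh, ⟨x, hx⟩, ⟨y, hy⟩⟩ := mem_filter.1 hcut
  simp only [mem_inter, mem_sdiff, Set.mem_toFinset, ConnectedComponent.mem_supp_iff] at hx hy
  obtain ⟨⟨hxh, hxK⟩, ⟨hyh, -, hyK⟩⟩ := And.intro hx hy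
  have hxy : (hgGraph hedge (A ∪ B)).Adj x y :=
    ⟨fun hxy => hyK (hxy ▸ hxK), e, mem_union_right A heB, h, hh, hxh, hyh⟩
  intro hK
  refine hyK (hK _ ?_)
  rw [← hxK]
  exact (ConnectedComponent.connectedComponentMk_eq_of_adj hxy).symm

end Merging

section Sampling

open SimpleGraph

variable (hedge : E → Finset (Finset V)) [Fintype V] [DecidableEq E]

lemma one_sub_bernoulliExpect_comps_le_connected [Nonempty V] {s : Finset E} {p : E → ℝ}
    (hp : ∀ e ∈ s, p e ∈ Set.Icc 0 1) :
    1 - bernoulliExpect s p (fun A => (comps hedge A : ℝ) - 1)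
      ≤ bernoulliExpect s p ({A | (hgGraph hedge A).Connected}.indicator 1) := by
  set χ : Finset E → ℝ := {A | (hgGraph hedge A).Connected}.indicator 1 with hχ
  have htotal := bernoulliExpect_add (s := s) (p := p) (g := fun A => 1 - χ A) (h := χ)
  simp only [sub_add_cancel, bernoulliExpect_const] at htotal
  have hle : bernoulliExpect s p (fun A => 1 - χ A)
      ≤ bernoulliExpect s p (fun A => (comps hedge A : ℝ) - 1) := by
    refine bernoulliExpect_mono hp fun A _ => ?_
    simp only [hχ, Set.indicator_apply, Set.mem_ofPred_eq, Pi.one_apply]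
    split_ifs with hA
    · simpa using one_le_comps hedge A
    · have h2 : (2 : ℝ) ≤ comps hedge A := by
        exact_mod_cast two_le_comps_of_not_connected hedge hA
      linarith
  linarith

variable [DecidableEq V] [Fintype E]

lemma bernoulliExpect_card_unmerged_le {A : Finset E} (h2 : 2 ≤ comps hedge A) {r : ℝ}
    (hr : r ∈ Set.Icc 0 1) :
    bernoulliExpect univ (fun _ => r) (fun B => (#{K | Unmerged hedge A B K} : ℝ))
      ≤ comps hedge A * (1 - r) ^ hconnectivity hedge := by
  have hK : ∀ K, bernoulliExpect univ (fun _ => r)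
      (fun B => if Unmerged hedge A B K then 1 else 0) ≤ (1 - r) ^ hconnectivity hedge := by
    intro K
    calc _ ≤ bernoulliExpect univ (fun _ => r)
          (fun B => if Disjoint B (vertexCut hedge K.supp.toFinset) then 1 else 0) := by
          refine bernoulliExpect_mono (fun _ _ => hr) fun B _ => ?_
          split_ifs with hU hB <;> try norm_num
          obtain ⟨e, heB, hecut⟩ := not_disjoint_iff.1 hB
          exact not_unmerged_of_mem_vertexCut hedge heB hecut hU
      _ = (1 - r) ^ #(vertexCut hedge K.supp.toFinset) := by
          rw [bernoulliExpect_indicator_disjoint, univ_inter, prod_const]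
      _ ≤ (1 - r) ^ hconnectivity hedge :=
          pow_le_pow_of_le_one (sub_nonneg.2 hr.2) (sub_le_self _ hr.1)
            (hconnectivity_le_card_vertexCut_supp hedge h2 K)
  simp only [card_filter, Nat.cast_sum, Nat.cast_ite, Nat.cast_one, Nat.cast_zero]
  rw [bernoulliExpect_sum]
  calc _ ≤ ∑ _K : (hgGraph hedge A).ConnectedComponent, (1 - r) ^ hconnectivity hedge :=
        sum_le_sum fun K _ => hK K
    _ = _ := by rw [sum_const, card_univ, nsmul_eq_mul, comps, Nat.card_eq_fintype_card]

lemma bernoulliExpect_comps_union_le [Nonempty V] (A : Finset E) {r : ℝ} (hr : r ∈ Set.Icc 0 1) :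
    bernoulliExpect univ (fun _ => r) (fun B => (comps hedge (A ∪ B) : ℝ) - 1)
      ≤ (1 / 2 + (1 - r) ^ hconnectivity hedge) * ((comps hedge A : ℝ) - 1) := by
  set c : ℝ := (comps hedge A : ℝ) with hc
  have hδ : 0 ≤ (1 - r) ^ hconnectivity hedge := pow_nonneg (sub_nonneg.2 hr.2) _
  rcases (one_le_comps hedge A).eq_or_lt with h1 | h2
  · calc _ ≤ bernoulliExpect univ (fun _ => r) (fun _ => c - 1) :=
          bernoulliExpect_mono (fun _ _ => hr) fun B _ => by
            rw [hc]
            gcongr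
            exact comps_union_le hedge A B
      _ = _ := by rw [bernoulliExpect_const, hc, ← h1]; ring
  · have h2' : (2 : ℝ) ≤ c := by rw [hc]; exact_mod_cast h2
    calc _ ≤ bernoulliExpect univ (fun _ => r)
          (fun B => (c - 1) / 2 + 1 / 2 * (#{K | Unmerged hedge A B K} : ℝ)) :=
          bernoulliExpect_mono (fun _ _ => hr) fun B _ => by
            have : (2 * comps hedge (A ∪ B) : ℝ) ≤ c + #{K | Unmerged hedge A B K} := by
              rw [hc]; exact_mod_cast two_mul_comps_union_le hedge A B
            linarith
      _ = (c - 1) / 2 + 1 / 2 * bernoulliExpect univ (fun _ => r)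
            (fun B => (#{K | Unmerged hedge A B K} : ℝ)) := by
          rw [bernoulliExpect_add, bernoulliExpect_const, bernoulliExpect_const_mul]
      _ ≤ (c - 1) / 2 + 1 / 2 * (c * (1 - r) ^ hconnectivity hedge) := by
          gcongr
          exact bernoulliExpect_card_unmerged_le hedge h2 hr
      _ ≤ _ := by nlinarith

lemma bernoulliExpect_comps_le [Nonempty V] {r : ℝ} (hr : r ∈ Set.Icc 0 1) (T : ℕ) :
    bernoulliExpect univ (fun _ => 1 - (1 - r) ^ T) (fun A => (comps hedge A : ℝ) - 1)
      ≤ ((Fintype.card V : ℝ) - 1) * (1 / 2 + (1 - r) ^ hconnectivity hedge) ^ T := by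
  have hδ : 0 ≤ 1 / 2 + (1 - r) ^ hconnectivity hedge :=
    add_nonneg (by norm_num) (pow_nonneg (sub_nonneg.2 hr.2) _)
  induction T with
  | zero => simp only [pow_zero, sub_self, bernoulliExpect_zero, comps_empty, mul_one, le_refl]
  | succ T ih =>
    have hround : (fun _ : E => 1 - (1 - r) ^ (T + 1))
        = fun _ => (1 - (1 - r) ^ T) + r - (1 - (1 - r) ^ T) * r := by
      funext; ring
    calc _ = bernoulliExpect univ (fun _ => 1 - (1 - r) ^ T) (fun A => bernoulliExpect univ
          (fun _ => r) (fun B => (comps hedge (A ∪ B) : ℝ) - 1)) := by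
          rw [hround]
          exact (bernoulliExpect_union _ _ _ _).symm
      _ ≤ bernoulliExpect univ (fun _ => 1 - (1 - r) ^ T)
          (fun A => (1 / 2 + (1 - r) ^ hconnectivity hedge) * ((comps hedge A : ℝ) - 1)) :=
          bernoulliExpect_mono (fun _ _ => one_sub_one_sub_pow_mem_Icc hr T)
            fun A _ => bernoulliExpect_comps_union_le hedge A hr
      _ ≤ (1 / 2 + (1 - r) ^ hconnectivity hedge) *
          (((Fintype.card V : ℝ) - 1) * (1 / 2 + (1 - r) ^ hconnectivity hedge) ^ T) := by
          rw [bernoulliExpect_const_mul]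
          exact mul_le_mul_of_nonneg_left ih hδ
      _ = _ := by ring

end Sampling

/-- For an `n`-vertex hedgegraph with connectivity `λ > 0`,
independently sampling each hedge with probability at least `20 log n / λ` (capped
at `1`) yields a connected sub-hedgegraph with probability at least `1 - 2/n`.
Sampling is modeled by the product Bernoulli distribution over subsets `A ⊆ E`. -/
theorem hedge_sampling_connected [Fintype V] [DecidableEq V]
    [Fintype E] [DecidableEq E] (hedge : E → Finset (Finset V))
    (hl : 0 < hconnectivity hedge)
    (p : E → ℝ)
    (hp1 : ∀ e, p e ≤ 1)
    (hpge : ∀ e, min 1 (20 * Real.log (Fintype.card V) /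
      (hconnectivity hedge : ℝ)) ≤ p e) :
    1 - 2 / (Fintype.card V : ℝ) ≤
      ∑ A ∈ (Finset.univ : Finset (Finset E)).filter
          (fun A => (hgGraph hedge A).Connected),
        (∏ e ∈ A, p e) * ∏ e ∈ Aᶜ, (1 - p e) := by
  have hn := two_le_card_of_hconnectivity_pos hedge hl
  have : Nonempty V := Fintype.card_pos_iff.1 (by omega)
  obtain ⟨r, hr, hrate, hround⟩ := exists_round_rate hn hl
  set T := 3 * Nat.clog 2 (Fintype.card V)
  have hrT : ∀ e ∈ (univ : Finset E), 1 - (1 - r) ^ T ∈ Set.Icc 0 1 :=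
    fun _ _ => one_sub_one_sub_pow_mem_Icc hr T
  have hp : ∀ e ∈ (univ : Finset E), p e ∈ Set.Icc 0 1 :=
    fun e he => ⟨(hrT e he).1.trans (hrate.trans (hpge e)), hp1 e⟩
  have hβ : 0 ≤ 1 / 2 + (1 - r) ^ hconnectivity hedge :=
    add_nonneg (by norm_num) (pow_nonneg (sub_nonneg.2 hr.2) _)
  have hdecay := sub_one_mul_pow_clog_le (by omega : 1 ≤ Fintype.card V) hβ (by linarith)
  have hn2 : 1 / (Fintype.card V : ℝ) ≤ 2 / Fintype.card V := by gcongr; norm_num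
  rw [← bernoulliExpect_univ_indicator]
  calc 1 - 2 / (Fintype.card V : ℝ)
      ≤ 1 - bernoulliExpect univ (fun _ => 1 - (1 - r) ^ T) (fun A => (comps hedge A : ℝ) - 1) := by
        linarith [bernoulliExpect_comps_le hedge hr T]
    _ ≤ bernoulliExpect univ (fun _ => 1 - (1 - r) ^ T)
          ({A | (hgGraph hedge A).Connected}.indicator 1) :=
        one_sub_bernoulliExpect_comps_le_connected hedge hrT
    _ ≤ _ := bernoulliExpect_mono_prob hrT hp (fun e _ => hrate.trans (hpge e))
        (monotone_indicator_connected hedge)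
end
end
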